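/- Let X be a Banach space, δ ∈ B(X) such that exp(t·δ) is an isometry for every t ∈ ℝ, and A1 ∈ B(X). Fix constants λ0, τ0, C0, s0 > 0. Call a pair (λ,τ) ∈ ℝ × ℝ admissible if τ ∈ [0,τ0] and λ²τ ∈ [0, λ0²τ0]. Suppose T is a family of operators T(λ,τ) ∈ B(X), defined for admissible pairs, satisfying ‖ T(λ,τ) − (Id + λ²τ²·A1) ∘ exp(τ·δ) ‖ ≤ C0·λ²τ³ for all admissible (λ,τ). Then there exists a constant C ≥ 0, depending only on C0, λ0, τ0, s0 and ‖A1‖, such that for every admissible pair (λ,τ) with τ > 0 and every m ∈ ℕ with m·λ²τ² ≤ s0: ‖ T(λ,τ)^m − exp(m·τ·(δ + λ²τ·A1)) ‖ ≤ C·τ. -/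

import Mathlib

open NormedSpace Set

/-!
Write `S = exp (τ • (δ + λ²τ • A1))`, so that the target is `S ^ m`. Since `exp (t • δ)` is an
isometry, Duhamel's formula `d/ds [exp ((t - s) • δ) * exp (s • (δ + B))] =
exp ((t - s) • δ) * B * exp (s • (δ + B))` together with Gronwall gives `‖S‖ ≤ exp (λ²τ² ‖A1‖)`,
and, the commutator of `exp (s • δ)` with `A1` being `O(s)`, it also gives
`S = (1 + λ²τ² • A1) * exp (τ • δ) + O(λ²τ³)`. Hence `T = S + O(λ²τ³)`, and telescoping
`T ^ m - S ^ m` costs `m * exp (O(m λ²τ²)) * O(λ²τ³)`, which is `O(τ)` when `m λ²τ² ≤ s₀`.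
-/

section BanachAlgebra

variable {𝔸 : Type*} [NormedRing 𝔸] [NormedAlgebra ℝ 𝔸] [CompleteSpace 𝔸]

lemma exp_add_smul (s t : ℝ) (x : 𝔸) : exp ((s + t) • x) = exp (s • x) * exp (t • x) := by
  let +nondep : NormedAlgebra ℚ 𝔸 := .restrictScalars ℚ ℝ 𝔸
  rw [add_smul, exp_add_of_commute (((Commute.refl x).smul_left s).smul_right t)]

lemma exp_natCast_mul_smul (n : ℕ) (t : ℝ) (x : 𝔸) : exp ((n * t) • x) = exp (t • x) ^ n := by
  let +nondep : NormedAlgebra ℚ 𝔸 := .restrictScalars ℚ ℝ 𝔸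
  rw [mul_smul, Nat.cast_smul_eq_nsmul, exp_nsmul]

lemma hasDerivAt_exp_smul_mul_exp_smul_add (x y : 𝔸) (t s : ℝ) :
    HasDerivAt (fun s : ℝ => exp ((t - s) • x) * exp (s • (x + y)))
      (exp ((t - s) • x) * (y * exp (s • (x + y)))) s := by
  have hleft : HasDerivAt (fun s : ℝ => exp ((t - s) • x)) ((-1 : ℝ) • (x * exp ((t - s) • x))) s :=
    (hasDerivAt_exp_smul_const' x (t - s)).scomp s ((hasDerivAt_id s).const_sub t)
  refine (hleft.mul (hasDerivAt_exp_smul_const' (x + y) s)).congr_deriv ?_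
  rw [neg_one_smul, ((Commute.refl x).smul_right (t - s)).exp_right.eq]
  noncomm_ring

end BanachAlgebra

lemma Real.exp_add_le_exp_add_of_nonneg {x y : ℝ} (hx : 0 ≤ x) (hy : 0 ≤ y) :
    Real.exp x + y ≤ Real.exp (x + y) := by
  rw [Real.exp_add]
  nlinarith [Real.one_le_exp hx, Real.add_one_le_exp y]

lemma norm_pow_sub_pow_le {R : Type*} [NormedRing R] {S T : R} {a : ℝ} (hT : ‖T‖ ≤ a)
    (hS : ‖S‖ ≤ a) (n : ℕ) : ‖T ^ n - S ^ n‖ ≤ n * a ^ (n - 1) * ‖T - S‖ := by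
  have ha : 0 ≤ a := (norm_nonneg _).trans hT
  induction n with
  | zero => simp
  | succ n ih =>
    have hSn : ‖(T - S) * S ^ n‖ ≤ ‖T - S‖ * a ^ n := by
      rcases n with _ | n
      · simp
      · exact (norm_mul_le _ _).trans (mul_le_mul_of_nonneg_left
          ((norm_pow_le' S n.succ_pos).trans (pow_le_pow_left₀ (norm_nonneg _) hS _))
          (norm_nonneg _))
    calc ‖T ^ (n + 1) - S ^ (n + 1)‖ = ‖T * (T ^ n - S ^ n) + (T - S) * S ^ n‖ := by
          rw [pow_succ', pow_succ']; noncomm_ring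
      _ ≤ a * (n * a ^ (n - 1) * ‖T - S‖) + ‖T - S‖ * a ^ n :=
          (norm_add_le _ _).trans (add_le_add ((norm_mul_le _ _).trans
            (mul_le_mul hT ih (norm_nonneg _) ha)) hSn)
      _ = (n + 1 : ℕ) * a ^ (n + 1 - 1) * ‖T - S‖ := by
          rcases n with _ | n
          · norm_num
          · push_cast; ring

lemma norm_pow_sub_pow_le_of_norm_le_exp {R : Type*} [NormedRing R] {S T : R} {x : ℝ}
    (hx : 0 ≤ x) (hS : ‖S‖ ≤ Real.exp x) (n : ℕ) :
    ‖T ^ n - S ^ n‖ ≤ n * Real.exp (n * (x + ‖T - S‖)) * ‖T - S‖ := by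
  set a := Real.exp (x + ‖T - S‖)
  have hSa : ‖S‖ ≤ a := hS.trans (Real.exp_le_exp.2 (le_add_of_nonneg_right (norm_nonneg _)))
  have hTa : ‖T‖ ≤ a := calc
    ‖T‖ ≤ ‖S‖ + ‖T - S‖ := norm_le_insert' T S
    _ ≤ a := (add_le_add_left hS _).trans (Real.exp_add_le_exp_add_of_nonneg hx (norm_nonneg _))
  have hpow : a ^ (n - 1) ≤ Real.exp (n * (x + ‖T - S‖)) := by
    rw [Real.exp_nat_mul]
    exact pow_le_pow_right₀ (Real.one_le_exp (by positivity)) (Nat.sub_le n 1)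
  calc ‖T ^ n - S ^ n‖ ≤ n * a ^ (n - 1) * ‖T - S‖ := norm_pow_sub_pow_le hTa hSa n
    _ ≤ n * Real.exp (n * (x + ‖T - S‖)) * ‖T - S‖ := by gcongr

section IsometricGroup

variable {X : Type*} [NormedAddCommGroup X] [NormedSpace ℝ X] {δ : X →L[ℝ] X}

lemma norm_exp_smul_mul (hiso : ∀ (t : ℝ) (x : X), ‖exp (t • δ) x‖ = ‖x‖) (t : ℝ)
    (M : X →L[ℝ] X) : ‖exp (t • δ) * M‖ = ‖M‖ := by
  refine le_antisymm (ContinuousLinearMap.opNorm_le_bound _ (norm_nonneg M) fun x => ?_)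
    (ContinuousLinearMap.opNorm_le_bound _ (norm_nonneg _) fun x => ?_)
  · change ‖exp (t • δ) (M x)‖ ≤ _
    rw [hiso]
    exact M.le_opNorm x
  · rw [← hiso t (M x)]
    exact (exp (t • δ) * M).le_opNorm x

lemma norm_exp_smul_le_one (hiso : ∀ (t : ℝ) (x : X), ‖exp (t • δ) x‖ = ‖x‖) (t : ℝ) :
    ‖exp (t • δ)‖ ≤ 1 :=
  ContinuousLinearMap.opNorm_le_bound _ zero_le_one fun x => by rw [hiso, one_mul]

variable [CompleteSpace X]

lemma norm_exp_smul_sub_one_le (hiso : ∀ (t : ℝ) (x : X), ‖exp (t • δ) x‖ = ‖x‖) {t : ℝ}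
    (ht : 0 ≤ t) : ‖exp (t • δ) - 1‖ ≤ ‖δ‖ * t := by
  have h := norm_image_sub_le_of_norm_deriv_le_segment'
    (fun s _ => (hasDerivAt_exp_smul_const δ s).hasDerivWithinAt (s := Icc 0 t))
    (fun s _ => (norm_exp_smul_mul hiso s δ).le) t (right_mem_Icc.2 ht)
  simpa using h

lemma norm_exp_smul_mul_sub_mul_exp_smul_le (hiso : ∀ (t : ℝ) (x : X), ‖exp (t • δ) x‖ = ‖x‖)
    {t : ℝ} (ht : 0 ≤ t) (B : X →L[ℝ] X) :
    ‖exp (t • δ) * B - B * exp (t • δ)‖ ≤ 2 * ‖δ‖ * t * ‖B‖ := by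
  have hE := norm_exp_smul_sub_one_le hiso ht
  calc ‖exp (t • δ) * B - B * exp (t • δ)‖
      = ‖(exp (t • δ) - 1) * B - B * (exp (t • δ) - 1)‖ := by noncomm_ring
    _ ≤ ‖exp (t • δ) - 1‖ * ‖B‖ + ‖B‖ * ‖exp (t • δ) - 1‖ :=
        (norm_sub_le _ _).trans (add_le_add (norm_mul_le _ _) (norm_mul_le _ _))
    _ ≤ ‖δ‖ * t * ‖B‖ + ‖B‖ * (‖δ‖ * t) := by gcongr
    _ = 2 * ‖δ‖ * t * ‖B‖ := by ring

/-- Gronwall applied to `s ↦ exp ((t - s) • δ) * exp (s • (δ + B))`, whose norm is that of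
`exp (s • (δ + B))`. -/
lemma norm_exp_smul_add_le (hiso : ∀ (t : ℝ) (x : X), ‖exp (t • δ) x‖ = ‖x‖)
    (B : X →L[ℝ] X) {t : ℝ} (ht : 0 ≤ t) : ‖exp (t • (δ + B))‖ ≤ Real.exp (‖B‖ * t) := by
  have hderiv := hasDerivAt_exp_smul_mul_exp_smul_add δ B t
  have h := norm_le_gronwallBound_of_norm_deriv_right_le (ε := 0)
    (fun s _ => (hderiv s).continuousAt.continuousWithinAt) (fun s _ => (hderiv s).hasDerivWithinAt)
    (by simpa using norm_exp_smul_le_one hiso t)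
    (fun s _ => by
      rw [norm_exp_smul_mul hiso, norm_exp_smul_mul hiso, add_zero]
      exact norm_mul_le _ _) t (right_mem_Icc.2 ht)
  simpa [gronwallBound_ε0] using h

lemma norm_exp_smul_add_sub_exp_smul_le (hiso : ∀ (t : ℝ) (x : X), ‖exp (t • δ) x‖ = ‖x‖)
    (B : X →L[ℝ] X) {t : ℝ} (ht : 0 ≤ t) :
    ‖exp (t • (δ + B)) - exp (t • δ)‖ ≤ ‖B‖ * Real.exp (‖B‖ * t) * t := by
  have h := norm_image_sub_le_of_norm_deriv_le_segment' (C := ‖B‖ * Real.exp (‖B‖ * t))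
    (fun s _ => (hasDerivAt_exp_smul_mul_exp_smul_add δ B t s).hasDerivWithinAt (s := Icc 0 t))
    (fun s hs => by
      rw [norm_exp_smul_mul hiso]
      refine (norm_mul_le _ _).trans (mul_le_mul_of_nonneg_left ?_ (norm_nonneg B))
      exact (norm_exp_smul_add_le hiso B hs.1).trans
        (Real.exp_le_exp.2 (mul_le_mul_of_nonneg_left hs.2.le (norm_nonneg B))))
    t (right_mem_Icc.2 ht)
  simpa using h

lemma norm_duhamel_integrand_sub_le (hiso : ∀ (t : ℝ) (x : X), ‖exp (t • δ) x‖ = ‖x‖)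
    (B : X →L[ℝ] X) {s τ : ℝ} (hs : 0 ≤ s) (hsτ : s ≤ τ) :
    ‖exp ((τ - s) • δ) * (B * exp (s • (δ + B))) - B * exp (τ • δ)‖ ≤
      ‖B‖ * (‖B‖ * Real.exp (‖B‖ * τ) + 2 * ‖δ‖) * τ := by
  set U := exp ((τ - s) • δ)
  set V := exp (s • δ)
  have hUV : exp (τ • δ) = U * V := by rw [← exp_add_smul (τ - s) s δ, sub_add_cancel]
  calc ‖U * (B * exp (s • (δ + B))) - B * exp (τ • δ)‖
      = ‖U * (B * (exp (s • (δ + B)) - V)) + (U * B - B * U) * V‖ := by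
        rw [hUV]; noncomm_ring
    _ ≤ ‖B‖ * (‖B‖ * Real.exp (‖B‖ * s) * s) + 2 * ‖δ‖ * (τ - s) * ‖B‖ * 1 := by
        refine (norm_add_le _ _).trans (add_le_add ?_ ?_)
        · rw [norm_exp_smul_mul hiso]
          exact (norm_mul_le _ _).trans (mul_le_mul_of_nonneg_left
            (norm_exp_smul_add_sub_exp_smul_le hiso B hs) (norm_nonneg B))
        · exact (norm_mul_le _ _).trans (mul_le_mul
            (norm_exp_smul_mul_sub_mul_exp_smul_le hiso (sub_nonneg.2 hsτ) B)
            (norm_exp_smul_le_one hiso s) (norm_nonneg _) (by positivity))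
    _ ≤ ‖B‖ * (‖B‖ * Real.exp (‖B‖ * τ) * τ) + 2 * ‖δ‖ * τ * ‖B‖ * 1 := by
        gcongr; linarith
    _ = ‖B‖ * (‖B‖ * Real.exp (‖B‖ * τ) + 2 * ‖δ‖) * τ := by ring

lemma norm_exp_smul_add_sub_le (hiso : ∀ (t : ℝ) (x : X), ‖exp (t • δ) x‖ = ‖x‖)
    (B : X →L[ℝ] X) {τ : ℝ} (hτ : 0 ≤ τ) :
    ‖exp (τ • (δ + B)) - (1 + τ • B) * exp (τ • δ)‖ ≤
      ‖B‖ * (‖B‖ * Real.exp (‖B‖ * τ) + 2 * ‖δ‖) * τ ^ 2 := by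
  have hderiv (s : ℝ) : HasDerivAt
      (fun s : ℝ => exp ((τ - s) • δ) * exp (s • (δ + B)) - (1 + s • B) * exp (τ • δ))
      (exp ((τ - s) • δ) * (B * exp (s • (δ + B))) - B * exp (τ • δ)) s := by
    refine (hasDerivAt_exp_smul_mul_exp_smul_add δ B τ s).sub ?_
    simpa using (((hasDerivAt_id s).smul_const B).const_add 1).mul_const (exp (τ • δ))
  have h := norm_image_sub_le_of_norm_deriv_le_segment'
    (fun s _ => (hderiv s).hasDerivWithinAt (s := Icc 0 τ))
    (fun s hs => norm_duhamel_integrand_sub_le hiso B hs.1 hs.2.le) τ (right_mem_Icc.2 hτ)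
  simpa [sq, mul_assoc] using h

/-- The theorem in the variables `ε = λ²τ` and `τ`. -/
theorem norm_pow_sub_exp_smul_le (hiso : ∀ (t : ℝ) (x : X), ‖exp (t • δ) x‖ = ‖x‖)
    (A T : X →L[ℝ] X) {C₀ ε₀ τ₀ s₀ ε τ : ℝ} (hC₀ : 0 ≤ C₀) (hε : ε ∈ Icc 0 ε₀)
    (hτ : τ ∈ Icc 0 τ₀) (hT : ‖T - (1 + (ε * τ) • A) * exp (τ • δ)‖ ≤ C₀ * ε * τ ^ 2)
    {m : ℕ} (hm : m * ε * τ ≤ s₀) :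
    let K := C₀ + ‖A‖ * (ε₀ * ‖A‖ * Real.exp (ε₀ * ‖A‖ * τ₀) + 2 * ‖δ‖)
    ‖T ^ m - exp ((m * τ) • (δ + ε • A))‖ ≤ s₀ * K * Real.exp (s₀ * (‖A‖ + K * τ₀)) * τ := by
  intro K
  obtain ⟨hε₀, hεε₀⟩ := hε
  obtain ⟨hτ₀, hττ₀⟩ := hτ
  have hε₀' : 0 ≤ ε₀ := hε₀.trans hεε₀
  have hs₀ : 0 ≤ s₀ := le_trans (by positivity) hm
  have hK : 0 ≤ K := by positivity
  have hεA : ‖ε • A‖ = ε * ‖A‖ := by rw [norm_smul, Real.norm_of_nonneg hε₀]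
  set S := exp (τ • (δ + ε • A))
  have hS : ‖S‖ ≤ Real.exp (ε * τ * ‖A‖) := by
    rw [mul_right_comm, ← hεA]
    exact norm_exp_smul_add_le hiso (ε • A) hτ₀
  have hSP : ‖S - (1 + (ε * τ) • A) * exp (τ • δ)‖ ≤ (K - C₀) * ε * τ ^ 2 := by
    have h := norm_exp_smul_add_sub_le hiso (ε • A) hτ₀
    rw [smul_smul, mul_comm τ, hεA] at h
    refine h.trans ?_
    calc ε * ‖A‖ * (ε * ‖A‖ * Real.exp (ε * ‖A‖ * τ) + 2 * ‖δ‖) * τ ^ 2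
        = ‖A‖ * (ε * ‖A‖ * Real.exp (ε * ‖A‖ * τ) + 2 * ‖δ‖) * ε * τ ^ 2 := by ring
      _ ≤ (K - C₀) * ε * τ ^ 2 := by simp only [K, add_sub_cancel_left]; gcongr
  have hTS : ‖T - S‖ ≤ K * ε * τ ^ 2 := by
    have := dist_triangle_right T S ((1 + (ε * τ) • A) * exp (τ • δ))
    simp only [dist_eq_norm] at this
    linarith
  rw [exp_natCast_mul_smul m τ (δ + ε • A)]
  calc ‖T ^ m - S ^ m‖ ≤ m * Real.exp (m * (ε * τ * ‖A‖ + ‖T - S‖)) * ‖T - S‖ :=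
        norm_pow_sub_pow_le_of_norm_le_exp (by positivity) hS m
    _ ≤ m * Real.exp (m * (ε * τ * ‖A‖ + K * ε * τ ^ 2)) * (K * ε * τ ^ 2) := by gcongr
    _ = (m * ε * τ) * K * Real.exp ((m * ε * τ) * (‖A‖ + K * τ)) * τ := by ring_nf
    _ ≤ s₀ * K * Real.exp (s₀ * (‖A‖ + K * τ₀)) * τ := by gcongr

end IsometricGroup

theorem van_hove_telescoping_estimate_general
    {X : Type*} [NormedAddCommGroup X] [NormedSpace ℝ X] [CompleteSpace X]
    (δ A1 : X →L[ℝ] X)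
    (hiso : ∀ (t : ℝ) (x : X), ‖exp (t • δ) x‖ = ‖x‖)
    (lam0 tau0 C0 s0 : ℝ)
    (htau0 : 0 < tau0) (hC0 : 0 < C0) (hs0 : 0 < s0) :
    ∃ C : ℝ, 0 ≤ C ∧
      ∀ T : ℝ → ℝ → X →L[ℝ] X,
        (∀ lam tau : ℝ, tau ∈ Set.Icc (0:ℝ) tau0 →
            lam ^ 2 * tau ∈ Set.Icc (0:ℝ) (lam0 ^ 2 * tau0) →
          ‖T lam tau
              - (ContinuousLinearMap.id ℝ X + (lam ^ 2 * tau ^ 2) • A1) ∘L exp (tau • δ)‖ ≤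
            C0 * lam ^ 2 * tau ^ 3) →
        ∀ lam tau : ℝ, tau ∈ Set.Icc (0:ℝ) tau0 →
            lam ^ 2 * tau ∈ Set.Icc (0:ℝ) (lam0 ^ 2 * tau0) → 0 < tau →
          ∀ m : ℕ, (m : ℝ) * lam ^ 2 * tau ^ 2 ≤ s0 →
            ‖(T lam tau) ^ m - exp (((m : ℝ) * tau) • (δ + (lam ^ 2 * tau) • A1))‖ ≤
              C * tau := by
  set K := C0 + ‖A1‖ * (lam0 ^ 2 * tau0 * ‖A1‖ * Real.exp (lam0 ^ 2 * tau0 * ‖A1‖ * tau0)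
    + 2 * ‖δ‖)
  refine ⟨s0 * K * Real.exp (s0 * (‖A1‖ + K * tau0)), by positivity, ?_⟩
  intro T hT lam tau hτ hε _ m hm
  refine norm_pow_sub_exp_smul_le hiso A1 (T lam tau) hC0.le hε hτ ?_ (by linarith)
  rw [show lam ^ 2 * tau * tau = lam ^ 2 * tau ^ 2 by ring]
  exact (hT lam tau hτ hε).trans_eq (by ring)

/-- **Telescoping estimate for the van Hove limit in the regime `τ → 0`, `λ²τ → 0`.**
Let `δ ∈ B(X)` generate a group of isometries and `A1 ∈ B(X)`.  Fix `λ0, τ0, C0, s0 > 0`; a pair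
`(λ,τ)` is admissible if `τ ∈ [0,τ0]` and `λ²τ ∈ [0,λ0²τ0]`.  If `T(λ,τ) ∈ B(X)` satisfies
`‖T(λ,τ) − (Id + λ²τ² A1) ∘ exp(τδ)‖ ≤ C0 λ²τ³` for all admissible pairs, then there is a
constant `C ≥ 0` (depending only on `C0, λ0, τ0, s0` and `A1`) with
`‖T(λ,τ)^m − exp(mτ(δ + λ²τ A1))‖ ≤ C τ` for all admissible `(λ,τ)` with `τ > 0` and all
`m ∈ ℕ` with `m λ²τ² ≤ s0`. -/
theorem van_hove_telescoping_estimate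
    {X : Type*} [NormedAddCommGroup X] [NormedSpace ℝ X] [CompleteSpace X]
    (δ A1 : X →L[ℝ] X)
    (hiso : ∀ (t : ℝ) (x : X), ‖exp (t • δ) x‖ = ‖x‖)
    (lam0 tau0 C0 s0 : ℝ)
    (hlam0 : 0 < lam0) (htau0 : 0 < tau0) (hC0 : 0 < C0) (hs0 : 0 < s0) :
    ∃ C : ℝ, 0 ≤ C ∧
      ∀ T : ℝ → ℝ → X →L[ℝ] X,
        (∀ lam tau : ℝ, tau ∈ Set.Icc (0:ℝ) tau0 →
            lam ^ 2 * tau ∈ Set.Icc (0:ℝ) (lam0 ^ 2 * tau0) →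
          ‖T lam tau
              - (ContinuousLinearMap.id ℝ X + (lam ^ 2 * tau ^ 2) • A1) ∘L exp (tau • δ)‖ ≤
            C0 * lam ^ 2 * tau ^ 3) →
        ∀ lam tau : ℝ, tau ∈ Set.Icc (0:ℝ) tau0 →
            lam ^ 2 * tau ∈ Set.Icc (0:ℝ) (lam0 ^ 2 * tau0) → 0 < tau →
          ∀ m : ℕ, (m : ℝ) * lam ^ 2 * tau ^ 2 ≤ s0 →
            ‖(T lam tau) ^ m - exp (((m : ℝ) * tau) • (δ + (lam ^ 2 * tau) • A1))‖ ≤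
              C * tau :=
  van_hove_telescoping_estimate_general δ A1 hiso lam0 tau0 C0 s0 htau0 hC0 hs0
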